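/- Define normalized polynomials ĴJ^m_{a,b} = J^m_{a,b} / ([a-b]_t!·[b-m]_t!·[m]_t!). Then they satisfy the recurrence ĴJ^m_{a,b} = ĴJ^{m-1}_{a-1,b-1} + t^{b-m}·ĴJ^m_{a-1,b} + t^m·[a-b+1]_t·ĴJ^m_{a,b-1} + q·[m+1]_t·ĴJ^{m+1}_{a,b}. -/

import Mathlib

open Polynomial

noncomputable section

/-- The t-analog `[k]_t = 1 + t + ... + t^(k-1)`. -/
def tA (k : ℕ) : Polynomial ℤ := ∑ i ∈ Finset.range k, Polynomial.X ^ i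

/-- The t-factorial `[k]_t! = [1]_t [2]_t ⋯ [k]_t`. -/
def tF (k : ℕ) : Polynomial ℤ := ∏ j ∈ Finset.range k, tA (j + 1)

/-- Embed `ℤ[t]` into `ℤ[t][q]` (outer variable `q`, inner variable `t`). -/
def ct : Polynomial ℤ →+* Polynomial (Polynomial ℤ) := Polynomial.C

/-- The variable `q` in `ℤ[t][q]`. -/
def qv : Polynomial (Polynomial ℤ) := Polynomial.X

/-- The variable `t` in `ℤ[t][q]`. -/
def tv : Polynomial (Polynomial ℤ) := Polynomial.C Polynomial.X

/-- `[k]_t` as an element of `ℤ[t][q]`, indexed by an integer (zero for `k ≤ 0`). -/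
def tAZ (k : ℤ) : Polynomial (Polynomial ℤ) := ct (tA k.toNat)

/-- `t^k` as an element of `ℤ[t][q]`, indexed by an integer. -/
def tpow (k : ℤ) : Polynomial (Polynomial ℤ) := ct (Polynomial.X ^ k.toNat)

/-- `[k]_t!` as an element of `ℤ[t][q]`, indexed by an integer. -/
def tFZ (k : ℤ) : Polynomial (Polynomial ℤ) := ct (tF k.toNat)

/-- `C(k,2) = k(k-1)/2`. -/
def choose2 (k : ℤ) : ℤ := k * (k - 1) / 2

/-- The coefficient of `t^i q^j` in `P ∈ ℤ[t][q]`, with value `0` for negative indices. -/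
def coeffQT (P : Polynomial (Polynomial ℤ)) (i j : ℤ) : ℤ :=
  if 0 ≤ i ∧ 0 ≤ j then (P.coeff j.toNat).coeff i.toNat else 0

/-- The kicking recurrence:
`J^m_{a,b} = [m]_t J^{m-1}_{a-1,b-1} + t^{b-m}[a-b]_t J^m_{a-1,b}
  + t^m [b-m]_t J^m_{a,b-1} + q [b-m]_t J^{m+1}_{a,b}`. -/
def KickRec (J : ℤ → ℤ → ℤ → Polynomial (Polynomial ℤ)) : Prop :=
  ∀ a b m : ℤ, b < a → m < b → 0 ≤ m →
    J a b m = tAZ m * J (a - 1) (b - 1) (m - 1)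
      + tpow (b - m) * tAZ (a - b) * J (a - 1) b m
      + tpow m * tAZ (b - m) * J a (b - 1) m
      + qv * tAZ (b - m) * J a b (m + 1)

/-- The initial conditions: `J^b_{a,b} = C(a,b) [b]_t! [a-b]_t!`, `J^m_{b,b} = J^0_{b,b-m}`,
and `J^m_{a,b} = 0` unless `a ≥ b ≥ m ≥ 0`. -/
def KickInit (J : ℤ → ℤ → ℤ → Polynomial (Polynomial ℤ)) : Prop :=
  (∀ a b : ℤ, 0 ≤ b → b ≤ a →
      J a b b = (a.toNat.choose b.toNat : Polynomial (Polynomial ℤ)) * tFZ b * tFZ (a - b)) ∧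
  (∀ b m : ℤ, 0 ≤ m → m ≤ b → J b b m = J b (b - m) 0) ∧
  (∀ a b m : ℤ, ¬(0 ≤ m ∧ m ≤ b ∧ b ≤ a) → J a b m = 0)

/-- The second kicking recurrence. -/
def KickRec2 (J : ℤ → ℤ → ℤ → Polynomial (Polynomial ℤ)) : Prop :=
  ∀ a b m : ℤ, b < a → m < b → 0 ≤ m →
    J a b m = tpow (b - m) * tAZ m * J (a - 1) (b - 1) (m - 1)
      + tAZ (a - b) * J (a - 1) b m
      + qv * tAZ (b - m) * J a (b - 1) m
      + tpow (a - b) * tAZ (b - m) * J a b (m + 1)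

/-!
Write `F = [a-b]_t! [b-m]_t! [m]_t!`. In each term of the kicking recurrence the factor `[a-b]_t`,
`[b-m]_t` or `[m]_t` completes the shifted factorial `[k-1]_t!` of the lower index to `[k]_t!`,
so every term becomes `F` times the matching term of the normalized recurrence; cancelling `F`
(nonzero, as `ℤ[t][q]` is a domain) gives the claim. For `m = 0` the first term is `0` on both
sides: `[0]_t = 0`, and `J^{-1} = 0` by the initial conditions, hence `Ĵ^{-1} = 0`.
-/

lemma tA_succ_ne_zero (n : ℕ) : tA (n + 1) ≠ 0 := by
  intro h
  have h1 := congrArg (eval 1) h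
  simp [tA, eval_finsetSum] at h1
  omega

lemma tF_ne_zero (n : ℕ) : tF n ≠ 0 :=
  Finset.prod_ne_zero_iff.mpr fun j _ => tA_succ_ne_zero j

lemma tFZ_ne_zero (k : ℤ) : tFZ k ≠ 0 := by
  simpa [tFZ, ct] using tF_ne_zero k.toNat

lemma tFZ_eq_tAZ_mul_tFZ_sub_one {k : ℤ} (hk : 0 < k) : tFZ k = tAZ k * tFZ (k - 1) := by
  obtain ⟨n, rfl⟩ : ∃ n : ℕ, k = n + 1 := ⟨k.toNat - 1, by omega⟩
  simp only [tFZ, tAZ, tF, add_sub_cancel_right, Int.toNat_natCast]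
  rw [show ((n : ℤ) + 1).toNat = n + 1 by omega, Finset.prod_range_succ, map_mul, mul_comm]

lemma normalizer_ne_zero (a b m : ℤ) : tFZ (a - b) * tFZ (b - m) * tFZ m ≠ 0 :=
  mul_ne_zero (mul_ne_zero (tFZ_ne_zero _) (tFZ_ne_zero _)) (tFZ_ne_zero _)

/-- the normalized polynomials `Ĵ^m_{a,b} = J^m_{a,b}/([a-b]_t![b-m]_t![m]_t!)`
satisfy `Ĵ^m_{a,b} = Ĵ^{m-1}_{a-1,b-1} + t^{b-m} Ĵ^m_{a-1,b}
+ t^m [a-b+1]_t Ĵ^m_{a,b-1} + q [m+1]_t Ĵ^{m+1}_{a,b}`. -/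
theorem Jhat_first_recurrence (J Jh : ℤ → ℤ → ℤ → Polynomial (Polynomial ℤ))
    (hrec : KickRec J) (hinit : KickInit J)
    (hJh : ∀ a b m : ℤ, J a b m = tFZ (a - b) * tFZ (b - m) * tFZ m * Jh a b m) :
    ∀ a b m : ℤ, b < a → m < b → 0 ≤ m →
      Jh a b m = Jh (a - 1) (b - 1) (m - 1)
        + tpow (b - m) * Jh (a - 1) b m
        + tpow m * tAZ (a - b + 1) * Jh a (b - 1) m
        + qv * tAZ (m + 1) * Jh a b (m + 1) := by
  intro a b m hba hmb hm
  set F := tFZ (a - b) * tFZ (b - m) * tFZ m with hF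
  have hFa := tFZ_eq_tAZ_mul_tFZ_sub_one (k := a - b) (by omega)
  have hFb := tFZ_eq_tAZ_mul_tFZ_sub_one (k := b - m) (by omega)
  have kick_down : tAZ m * J (a - 1) (b - 1) (m - 1) = F * Jh (a - 1) (b - 1) (m - 1) := by
    rcases hm.eq_or_lt with rfl | hm
    · have hJ : J (a - 1) (b - 1) (0 - 1) = 0 := hinit.2.2 _ _ _ (by omega)
      have hJh0 : Jh (a - 1) (b - 1) (0 - 1) = 0 :=
        (mul_eq_zero.mp ((hJh ..).symm.trans hJ)).resolve_left (normalizer_ne_zero _ _ _)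
      rw [hJ, hJh0, mul_zero, mul_zero]
    · rw [hJh, hF, tFZ_eq_tAZ_mul_tFZ_sub_one hm, show a - 1 - (b - 1) = a - b by ring,
        show b - 1 - (m - 1) = b - m by ring]
      ring
  have kick_a : tAZ (a - b) * J (a - 1) b m = F * Jh (a - 1) b m := by
    rw [hJh, hF, hFa, show a - 1 - b = a - b - 1 by ring]
    ring
  have kick_b : tAZ (b - m) * J a (b - 1) m = F * (tAZ (a - b + 1) * Jh a (b - 1) m) := by
    rw [hJh, hF, hFb, tFZ_eq_tAZ_mul_tFZ_sub_one (k := a - (b - 1)) (by omega),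
      show a - (b - 1) = a - b + 1 by ring, show b - 1 - m = b - m - 1 by ring,
      show a - b + 1 - 1 = a - b by ring]
    ring
  have kick_m : tAZ (b - m) * J a b (m + 1) = F * (tAZ (m + 1) * Jh a b (m + 1)) := by
    rw [hJh, hF, hFb, tFZ_eq_tAZ_mul_tFZ_sub_one (k := m + 1) (by omega),
      show b - (m + 1) = b - m - 1 by ring, add_sub_cancel_right]
    ring
  apply mul_left_cancel₀ (normalizer_ne_zero a b m)
  linear_combination (hJh a b m).symm + hrec a b m hba hmb hm + kick_down
    + tpow (b - m) * kick_a + tpow m * kick_b + qv * kick_m
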